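/- arXiv:1009.5277 — 2 statements merged into one kernel-verified Lean document; each statement's English description precedes it below -/
import Mathlib

section
/- Frechet differentiability of the system operator implies Frechet differentiability of the natural state: if F : U → Y has Frechet derivative L(u,·) at the point u^t ⊣ R_t v_{0,∞} for all relevant v, then the natural state map ξ_t^u : U_{0,∞} → Y_{0,∞} is Frechet differentiable at v_{0,∞} = L_t u_{t,∞}, with derivative w_{0,∞} ↦ (L_t L(u^t ⊣ R_t v_{0,∞}, 0^t ⊣ R_t w_{0,∞}))_{0,∞}, and the operator norm of this derivative is at most ‖L(u^t⊣R_t v_{0,∞}, ·)‖. -/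
theorem HasFDerivAt.comp_affine_sub {E F G : Type*}
    [NormedAddCommGroup E] [NormedSpace ℝ E]
    [NormedAddCommGroup F] [NormedSpace ℝ F]
    [NormedAddCommGroup G] [NormedSpace ℝ G]
    {f : F → G} {f' : F →L[ℝ] G} {x₀ : F} (hf : HasFDerivAt f f' x₀)
    (J : E →L[ℝ] F) (v₀ : E) :
    HasFDerivAt (fun v => f (x₀ + J (v - v₀))) (f'.comp J) v₀ := by
  have hJ : HasFDerivAt (fun v => x₀ + J (v - v₀)) J v₀ :=
    ((J.hasFDerivAt.sub_const (J v₀)).const_add x₀).congr_of_eventuallyEq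
      (Filter.Eventually.of_forall fun v => by simp only [map_sub])
  exact (by simpa using hf : HasFDerivAt f f' (x₀ + J (v₀ - v₀))).comp v₀ hJ

theorem ContinuousLinearMap.opNorm_le_one_of_norm_map_le {E F : Type*}
    [SeminormedAddCommGroup E] [NormedSpace ℝ E]
    [SeminormedAddCommGroup F] [NormedSpace ℝ F]
    (T : E →L[ℝ] F) (hT : ∀ y, ‖T y‖ ≤ ‖y‖) : ‖T‖ ≤ 1 :=
  T.opNorm_le_bound zero_le_one fun y => by simpa using hT y

/-- Proposition 22: Frechet differentiability of the natural state is inherited from the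
system. Here `x₀ = u^t ⊣ R_t v₀`; the splice of the fixed past with a future increment is
the linear isometry `J` (`w ↦ 0^t ⊣ R_t w`); `T` is the norm-nonincreasing linear
truncation-and-shift `y ↦ (L_t y)_{0,∞}`; and the natural state is
`ξ v = T (F (x₀ + J (v − v₀)))`. If `F` has Frechet derivative `L` at `x₀`, then `ξ` has
Frechet derivative `T ∘ L ∘ J` at `v₀`, whose operator norm is at most `‖L‖`. -/
theorem natural_state_frechet {U Y Ufut Yfut : Type*}
    [NormedAddCommGroup U] [NormedSpace ℝ U]
    [NormedAddCommGroup Y] [NormedSpace ℝ Y]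
    [NormedAddCommGroup Ufut] [NormedSpace ℝ Ufut]
    [NormedAddCommGroup Yfut] [NormedSpace ℝ Yfut]
    (F : U → Y) (x₀ : U) (L : U →L[ℝ] Y) (hF : HasFDerivAt F L x₀)
    (J : Ufut →ₗᵢ[ℝ] U) (T : Y →L[ℝ] Yfut) (hT : ∀ y, ‖T y‖ ≤ ‖y‖)
    (v₀ : Ufut) (ξ : Ufut → Yfut)
    (hξ : ∀ v, ξ v = T (F (x₀ + J (v - v₀)))) :
    HasFDerivAt ξ (T.comp (L.comp J.toContinuousLinearMap)) v₀ ∧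
      ‖T.comp (L.comp J.toContinuousLinearMap)‖ ≤ ‖L‖ := by
  obtain rfl : ξ = fun v => T (F (x₀ + J (v - v₀))) := funext hξ
  refine ⟨T.hasFDerivAt.comp v₀ (hF.comp_affine_sub J.toContinuousLinearMap v₀), ?_⟩
  calc ‖T.comp (L.comp J.toContinuousLinearMap)‖
      ≤ ‖T‖ * (‖L‖ * ‖J.toContinuousLinearMap‖) :=
        (T.opNorm_comp_le _).trans (by gcongr; exact L.opNorm_comp_le _)
    _ ≤ 1 * (‖L‖ * 1) := by
        gcongr
        · exact T.opNorm_le_one_of_norm_map_le hT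
        · exact J.norm_toContinuousLinearMap_le
    _ = ‖L‖ := by ring
end

section
/- Uniqueness of symmetric kernels from the induced polynomial functional (degree N, continuous kernels): if h : [0,∞)^N → ℝ is continuous, absolutely integrable, symmetric, and ∫₀^σ⋯∫₀^σ h(τ₁,…,τ_N) v(σ−τ₁)⋯v(σ−τ_N) dτ₁⋯dτ_N = 0 for all bounded piecewise continuous v and all σ > 0, then h ≡ 0. -/
/-!
Take `v = ∑_{j ∈ S} 1_{I_j}(σ - ·)` for a box `I_1 × ⋯ × I_N ⊆ [0, σ]^N`. Summing the vanishing
integrals over all `S` with signs `(-1)^{N - |S|}` isolates, by inclusion–exclusion, the sum over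
permutations `π` of `∫ h(τ) ∏ᵢ 1_{I_{π i}}(τᵢ) dτ`. Symmetry of `h` makes all these terms equal,
so `h` integrates to zero over every box in the orthant, and by continuity `h` vanishes there.
-/

open MeasureTheory Set

open Finset in
theorem Finset.sum_superset_neg_one_pow_card_compl {ι : Type*} [Fintype ι] [DecidableEq ι]
    (T : Finset ι) : ∑ S with T ⊆ S, (-1 : ℤ) ^ #Sᶜ = if T = univ then 1 else 0 := by
  have hcompl : ∑ S with T ⊆ S, (-1 : ℤ) ^ #Sᶜ = ∑ U ∈ Tᶜ.powerset, (-1 : ℤ) ^ #U :=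
    sum_nbij' compl compl (by simp) (by simp [subset_compl_comm]) (by simp) (by simp) (by simp)
  simp [hcompl, sum_powerset_neg_one_pow_card]

open Finset in
theorem Finset.sum_neg_one_pow_card_compl_smul_sum_piFinset {ι β : Type*} [Fintype ι]
    [DecidableEq ι] [AddCommGroup β] (M : (ι → ι) → β) :
    ∑ S : Finset ι, (-1 : ℤ) ^ #Sᶜ • ∑ f ∈ Fintype.piFinset (fun _ ↦ S), M f =
      ∑ π : Equiv.Perm ι, M π := by
  have hpi (S : Finset ι) :
      Fintype.piFinset (fun _ : ι ↦ S) = univ.filter (fun f ↦ univ.image f ⊆ S) := by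
    ext f; simp [image_subset_iff]
  have hperm : univ.filter (fun f : ι → ι ↦ univ.image f = univ) =
      univ.image (fun π : Equiv.Perm ι ↦ ⇑π) := by
    ext f
    simp only [mem_filter, mem_univ, true_and, mem_image]
    constructor
    · intro hf
      have hsurj : Function.Surjective f := fun y ↦ by
        simpa using (hf.symm ▸ mem_univ y : y ∈ univ.image f)
      exact ⟨.ofBijective f ⟨Finite.injective_iff_surjective.2 hsurj, hsurj⟩, rfl⟩
    · rintro ⟨π, rfl⟩
      exact image_univ_of_surjective π.surjective
  -- Only the `f` whose image is everything, i.e. the permutations, survive the alternating sum.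
  calc ∑ S : Finset ι, (-1 : ℤ) ^ #Sᶜ • ∑ f ∈ Fintype.piFinset (fun _ ↦ S), M f
      = ∑ f : ι → ι, (∑ S with univ.image f ⊆ S, (-1 : ℤ) ^ #Sᶜ) • M f := by
        simp_rw [hpi, smul_sum, sum_filter, sum_smul, ite_smul, zero_smul]
        exact sum_comm
    _ = ∑ π : Equiv.Perm ι, M π := by
        simp_rw [sum_superset_neg_one_pow_card_compl, ite_smul, one_smul, zero_smul,
          ← sum_filter, hperm]
        exact sum_image fun π _ σ _ h ↦ DFunLike.coe_injective h

section SymmetricKernel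

variable {ι α : Type*} [Fintype ι] [MeasurableSpace α] (ν : Measure α) [SigmaFinite ν]
  {H : (ι → α) → ℝ}

theorem integral_mul_prod_perm_eq (hH : ∀ (π : Equiv.Perm ι) x, H (x ∘ π) = H x)
    (g : ι → α → ℝ) (π : Equiv.Perm ι) :
    ∫ x, H x * ∏ i, g (π i) (x i) ∂Measure.pi (fun _ ↦ ν) =
      ∫ x, H x * ∏ i, g i (x i) ∂Measure.pi (fun _ ↦ ν) := by
  have hmp : MeasurePreserving (MeasurableEquiv.arrowCongr' π.symm (.refl α))
      (Measure.pi fun _ ↦ ν) (Measure.pi fun _ ↦ ν) :=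
    measurePreserving_arrowCongr' _ _ π.symm _ fun _ ↦ .id ν
  rw [← hmp.integral_comp']
  congr 1 with x
  have he : MeasurableEquiv.arrowCongr' π.symm (.refl α) x = x ∘ π := rfl
  rw [he, hH]
  exact congrArg _ (Equiv.prod_comp π fun i ↦ g i (x i))

theorem integral_mul_prod_eq_zero_of_forall_integral_mul_prod_sum_eq_zero
    (hH : ∀ (π : Equiv.Perm ι) x, H (x ∘ π) = H x) (g : ι → α → ℝ)
    (hint : ∀ f : ι → ι, Integrable (fun x ↦ H x * ∏ i, g (f i) (x i)) (Measure.pi fun _ ↦ ν))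
    (hdiag : ∀ S : Finset ι, ∫ x, H x * ∏ i, ∑ j ∈ S, g j (x i) ∂Measure.pi (fun _ ↦ ν) = 0) :
    ∫ x, H x * ∏ i, g i (x i) ∂Measure.pi (fun _ ↦ ν) = 0 := by
  classical
  set M : (ι → ι) → ℝ := fun f ↦ ∫ x, H x * ∏ i, g (f i) (x i) ∂Measure.pi (fun _ ↦ ν)
  have hexpand (S : Finset ι) : ∫ x, H x * ∏ i, ∑ j ∈ S, g j (x i) ∂Measure.pi (fun _ ↦ ν) =
      ∑ f ∈ Fintype.piFinset (fun _ ↦ S), M f := by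
    simp_rw [Finset.prod_univ_sum, Finset.mul_sum]
    exact integral_finsetSum _ fun f _ ↦ hint f
  have hsum : ∑ π : Equiv.Perm ι, M π = 0 := by
    simp [← Finset.sum_neg_one_pow_card_compl_smul_sum_piFinset, ← hexpand, hdiag]
  simp_rw [M, integral_mul_prod_perm_eq ν hH, Finset.sum_const, Finset.card_univ] at hsum
  exact (smul_eq_zero.1 hsum).resolve_left Fintype.card_ne_zero

end SymmetricKernel

theorem exists_pos_setIntegral_Icc {ι : Type*} [Fintype ι] {h : (ι → ℝ) → ℝ}
    (hcont : Continuous h) {x₀ : ι → ℝ} (hpos : 0 < h x₀) :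
    ∃ d, (∀ i, x₀ i < d i) ∧ 0 < ∫ x in Icc x₀ d, h x := by
  obtain ⟨ε, hε, hball⟩ :=
    Metric.eventually_nhds_iff.1 (hcont.continuousAt.eventually (lt_mem_nhds hpos))
  refine ⟨x₀ + fun _ ↦ ε / 2, fun i ↦ by simp [hε], ?_⟩
  have hpos_on : ∀ y ∈ Icc x₀ (x₀ + fun _ ↦ ε / 2), 0 < h y := fun y hy ↦ hball <| by
    refine (dist_pi_lt_iff hε).2 fun i ↦ ?_
    have hlo := hy.1 i
    have hhi := hy.2 i
    simp only [Pi.add_apply] at hhi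
    rw [Real.dist_eq, abs_lt]
    constructor <;> linarith
  rw [setIntegral_pos_iff_support_of_nonneg_ae
    (ae_restrict_of_forall_mem measurableSet_Icc fun y hy ↦ (hpos_on y hy).le)
    hcont.integrableOn_Icc,
    inter_eq_right.2 fun y hy ↦ Function.mem_support.2 (hpos_on y hy).ne', Real.volume_Icc_pi]
  exact pos_iff_ne_zero.2 <| Finset.prod_ne_zero_iff.2 fun i _ ↦ by simp [hε]

theorem eq_zero_of_forall_setIntegral_Icc_eq_zero {ι : Type*} [Fintype ι] {h : (ι → ℝ) → ℝ}
    (hcont : Continuous h) {x₀ : ι → ℝ}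
    (hzero : ∀ d, (∀ i, x₀ i < d i) → ∫ x in Icc x₀ d, h x = 0) : h x₀ = 0 := by
  rcases lt_trichotomy (h x₀) 0 with hneg | heq | hpos
  · obtain ⟨d, hd, hd_pos⟩ := exists_pos_setIntegral_Icc hcont.neg (neg_pos.2 hneg)
    simp [integral_neg, hzero d hd] at hd_pos
  · exact heq
  · obtain ⟨d, hd, hd_pos⟩ := exists_pos_setIntegral_Icc hcont hpos
    simp [hzero d hd] at hd_pos

theorem mul_prod_indicator_one_apply_eq_indicator_pi {ι α M₀ : Type*} [Fintype ι]
    [CommMonoidWithZero M₀]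
    (H : (ι → α) → M₀) (s : ι → Set α) (x : ι → α) :
    H x * ∏ i, (s i).indicator 1 (x i) = (univ.pi s).indicator H x := by
  by_cases hx : x ∈ univ.pi s
  · rw [indicator_of_mem hx, Finset.prod_eq_one fun i _ ↦ indicator_of_mem (hx i (mem_univ i)) _,
      mul_one]
  · obtain ⟨i, -, hi⟩ := not_forall₂.1 hx
    rw [indicator_of_notMem hx, Finset.prod_eq_zero (Finset.mem_univ i) (indicator_of_notMem hi _),
      mul_zero]

theorem abs_sum_indicator_one_le {ι α : Type*} (S : Finset ι) (s : ι → Set α) (a : α) :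
    |∑ j ∈ S, (s j).indicator (1 : α → ℝ) a| ≤ S.card := by
  calc |∑ j ∈ S, (s j).indicator (1 : α → ℝ) a| ≤ ∑ j ∈ S, |(s j).indicator (1 : α → ℝ) a| :=
        Finset.abs_sum_le_sum_abs _ _
    _ ≤ ∑ _j ∈ S, (1 : ℝ) := Finset.sum_le_sum fun j _ ↦ by by_cases ha : a ∈ s j <;> simp [ha]
    _ = S.card := by simp

theorem finite_setOf_not_continuousAt_sum_indicator_sub {ι : Type*} (S : Finset ι)
    {s : ι → Set ℝ} (hs : ∀ j, (frontier (s j)).Finite) (σ : ℝ) :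
    {y | ¬ContinuousAt (fun y ↦ ∑ j ∈ S, (s j).indicator (1 : ℝ → ℝ) (σ - y)) y}.Finite := by
  refine (S.finite_toSet.biUnion fun j _ ↦
    (hs j).preimage (sub_right_injective.injOn (f := fun y : ℝ ↦ σ - y))).subset fun y hy ↦ ?_
  by_contra hcont
  simp only [mem_iUnion, mem_preimage, not_exists] at hcont
  exact hy <| tendsto_finsetSum S fun j hj ↦
    (continuousOn_const.continuousAt_indicator (hcont j hj)).comp
      (continuousAt_const.sub continuousAt_id)

theorem symmetric_kernel_unique_general (N : ℕ)
    (h : (Fin N → ℝ) → ℝ) (hcont : Continuous h)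
    (hsym : ∀ (π : Equiv.Perm (Fin N)) (x : Fin N → ℝ), h (x ∘ π) = h x)
    (hvanish : ∀ v : ℝ → ℝ,
      (∃ C, ∀ x, |v x| ≤ C) →
      (∀ a b : ℝ, {x ∈ Icc a b | ¬ ContinuousAt v x}.Finite) →
      ∀ σ : ℝ, 0 < σ →
        (∫ x in Set.univ.pi fun _ : Fin N => Icc (0:ℝ) σ,
          h x * ∏ i : Fin N, v (σ - x i)) = 0) :
    ∀ x : Fin N → ℝ, (∀ i, 0 ≤ x i) → h x = 0 := by
  intro c hc
  refine eq_zero_of_forall_setIntegral_Icc_eq_zero hcont fun d hcd ↦ ?_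
  obtain ⟨M, hM⟩ := Finite.exists_le d
  set σ := max M 1
  set box := univ.pi fun _ : Fin N ↦ Icc (0 : ℝ) σ
  have hsub : Icc c d ⊆ box := fun x hx i _ ↦
    ⟨(hc i).trans (hx.1 i), (hx.2 i).trans ((hM i).trans (le_max_left _ _))⟩
  have hμ : volume.restrict box = Measure.pi fun _ ↦ volume.restrict (Icc (0 : ℝ) σ) := by
    rw [volume_pi]; exact Measure.restrict_pi_pi _ _
  set g : Fin N → ℝ → ℝ := fun j ↦ (Icc (c j) (d j)).indicator 1
  have hbox : ∫ x in Icc c d, h x = ∫ x in box, h x * ∏ i, g i (x i) := by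
    simp_rw [g, mul_prod_indicator_one_apply_eq_indicator_pi, pi_univ_Icc,
      setIntegral_indicator measurableSet_Icc, inter_eq_right.2 hsub]
  rw [hbox, hμ]
  refine integral_mul_prod_eq_zero_of_forall_integral_mul_prod_sum_eq_zero _ hsym g
    (fun f ↦ ?_) fun S ↦ ?_
  · simp_rw [g, ← hμ, mul_prod_indicator_one_apply_eq_indicator_pi]
    exact (hcont.continuousOn.integrableOn_compact (isCompact_univ_pi fun _ ↦ isCompact_Icc)
      ).indicator (MeasurableSet.univ_pi fun _ ↦ measurableSet_Icc)
  · have hS := hvanish (fun y ↦ ∑ j ∈ S, g j (σ - y)) ⟨S.card, abs_sum_indicator_one_le S _⟩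
      (fun _ _ ↦ (finite_setOf_not_continuousAt_sum_indicator_sub S
        (fun j ↦ (frontier_Icc (hcd j).le).symm ▸ toFinite _) σ).subset fun x hx ↦ hx.2)
      σ (lt_max_of_lt_right one_pos)
    rw [← hμ]
    simpa only [sub_sub_cancel] using hS

/-- Uniqueness of continuous symmetric kernels from the induced degree-`N` polynomial
functional (key step of Proposition 20, scalar homogeneous case): if `h` is continuous,
absolutely integrable on `[0,∞)^N`, symmetric, and
`∫_{[0,σ]^N} h(τ) v(σ−τ₁)⋯v(σ−τ_N) dτ = 0` for every bounded piecewise continuous `v`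
and every `σ > 0`, then `h` vanishes on `[0,∞)^N`. -/
theorem symmetric_kernel_unique (N : ℕ) (hN : 0 < N)
    (h : (Fin N → ℝ) → ℝ) (hcont : Continuous h)
    (hint : IntegrableOn h {x : Fin N → ℝ | ∀ i, 0 ≤ x i})
    (hsym : ∀ (π : Equiv.Perm (Fin N)) (x : Fin N → ℝ), h (x ∘ π) = h x)
    (hvanish : ∀ v : ℝ → ℝ,
      (∃ C, ∀ x, |v x| ≤ C) →
      (∀ a b : ℝ, {x ∈ Icc a b | ¬ ContinuousAt v x}.Finite) →
      ∀ σ : ℝ, 0 < σ →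
        (∫ x in Set.univ.pi fun _ : Fin N => Icc (0:ℝ) σ,
          h x * ∏ i : Fin N, v (σ - x i)) = 0) :
    ∀ x : Fin N → ℝ, (∀ i, 0 ≤ x i) → h x = 0 :=
  symmetric_kernel_unique_general N h hcont hsym hvanish
end
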